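/- Let G be a countable groupoid and ψ : G → ℝ a real conditionally negative definite function: ψ vanishes on units, ψ(γ) = ψ(γ⁻¹), and for every unit x, all γ₁,…,γ_n ∈ G^x and real λ₁,…,λ_n with Σλ_i = 0, one has Σ_{i,j} λ_i λ_j ψ(γ_i⁻¹γ_j) ≤ 0. Then for every t > 0, the function γ ↦ exp(−tψ(γ)) is positive definite on G. -/

import Mathlib

open MeasureTheory ENNReal Filter Topology
open scoped ComplexOrder

/-- A discrete (countable) groupoid, given algebraically: a type `E` of arrows over a
unit space `X`, with range `r`, source `s`, a (total) partial multiplication `mul`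
(only constrained on composable pairs), inversion, and countable source fibres. -/
structure CountableGroupoid where
  E : Type
  X : Type
  r : E → X
  s : E → X
  unit : X → E
  mul : E → E → E
  inv : E → E
  r_unit : ∀ x, r (unit x) = x
  s_unit : ∀ x, s (unit x) = x
  mul_assoc' : ∀ a b c, s a = r b → s b = r c → mul (mul a b) c = mul a (mul b c)
  r_mul : ∀ a b, s a = r b → r (mul a b) = r a
  s_mul : ∀ a b, s a = r b → s (mul a b) = s b
  unit_mul : ∀ a, mul (unit (r a)) a = a
  mul_unit : ∀ a, mul a (unit (s a)) = a
  r_inv : ∀ a, r (inv a) = s a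
  s_inv : ∀ a, s (inv a) = r a
  mul_inv : ∀ a, mul a (inv a) = unit (r a)
  inv_mul : ∀ a, mul (inv a) a = unit (s a)
  countable_fibers : ∀ x, {γ : E | s γ = x}.Countable

namespace CountableGroupoid

variable (G : CountableGroupoid)

/-- Sum of a nonnegative function over the source fibre `G_x = s⁻¹(x)`. -/
noncomputable def sFiberSum (f : G.E → ℝ≥0∞) (x : G.X) : ℝ≥0∞ :=
  ∑' γ : {γ : G.E // G.s γ = x}, f γ.1

/-- Sum of a nonnegative function over the range fibre `G^x = r⁻¹(x)`. -/
noncomputable def rFiberSum (f : G.E → ℝ≥0∞) (x : G.X) : ℝ≥0∞ :=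
  ∑' γ : {γ : G.E // G.r γ = x}, f γ.1

/-- The `I`-norm : `max (ess sup_x Σ_{r γ = x} |f γ|, ess sup_x Σ_{s γ = x} |f γ|)`. -/
noncomputable def Inorm [MeasurableSpace G.X] (μ : Measure G.X) (f : G.E → ℂ) : ℝ≥0∞ :=
  max (essSup (fun x => G.rFiberSum (fun γ => (‖f γ‖₊ : ℝ≥0∞)) x) μ)
      (essSup (fun x => G.sFiberSum (fun γ => (‖f γ‖₊ : ℝ≥0∞)) x) μ)

/-- The factorizations `γ = γ₁ γ₂` of an arrow `γ`. -/
def Factorizations (γ : G.E) : Type :=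
  {p : G.E × G.E // G.s p.1 = G.r p.2 ∧ G.mul p.1 p.2 = γ}

/-- Convolution product `(f*g)(γ) = Σ_{γ₁γ₂ = γ} f(γ₁) g(γ₂)`. -/
noncomputable def conv (f g : G.E → ℂ) (γ : G.E) : ℂ :=
  ∑' p : G.Factorizations γ, f p.1.1 * g p.1.2

/-- Involution `f^*(γ) = conj (f (γ⁻¹))`. -/
noncomputable def starF (f : G.E → ℂ) (γ : G.E) : ℂ := (starRingEnd ℂ) (f (G.inv γ))

/-- The measure `ν` on `G` induced by `μ`: `ν(A) = ∫_X #(A ∩ s⁻¹ x) dμ(x)`. -/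
noncomputable def nuSet [MeasurableSpace G.X] (μ : Measure G.X) (A : Set G.E) : ℝ≥0∞ :=
  ∫⁻ x, (∑' _γ : ↥(A ∩ {γ : G.E | G.s γ = x}), (1 : ℝ≥0∞)) ∂μ

/-- Positive definiteness of a function on a groupoid. -/
def IsPosDef (F : G.E → ℂ) : Prop :=
  ∀ (x : G.X) (n : ℕ) (γ : Fin n → G.E), (∀ i, G.r (γ i) = x) →
    ∀ lam : Fin n → ℂ,
      0 ≤ ∑ i, ∑ j, lam i * (starRingEnd ℂ) (lam j) * F (G.mul (G.inv (γ i)) (γ j))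

/-- Real conditionally negative definite functions on a groupoid. -/
def IsCondNegDef (ψ : G.E → ℝ) : Prop :=
  (∀ x, ψ (G.unit x) = 0) ∧ (∀ γ, ψ (G.inv γ) = ψ γ) ∧
  (∀ (x : G.X) (n : ℕ) (γ : Fin n → G.E), (∀ i, G.r (γ i) = x) →
    ∀ lam : Fin n → ℝ, (∑ i, lam i) = 0 →
      (∑ i, ∑ j, lam i * lam j * ψ (G.mul (G.inv (γ i)) (γ j))) ≤ 0)

/-- `Q^n` : products of `n` elements of `Q` (with `Q^0` the units). -/
def Qpow (Q : Set G.E) : ℕ → Set G.E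
  | 0 => Set.range G.unit
  | n+1 => {γ : G.E | ∃ a ∈ Q, ∃ b ∈ Qpow Q n, G.s a = G.r b ∧ γ = G.mul a b}

/-- A reduced composable chain of elements of `Q` (no backtracking). -/
def IsReducedChain (Q : Set G.E) : List G.E → Prop
  | [] => True
  | [a] => a ∈ Q
  | a :: b :: l => a ∈ Q ∧ G.s a = G.r b ∧ b ≠ G.inv a ∧ IsReducedChain Q (b :: l)

/-- A treeing: a symmetric generating set disjoint from the units such that each fibre
graph is a tree (no nontrivial reduced loops). -/
def IsTreeing (Q : Set G.E) : Prop :=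
  (∀ γ ∈ Q, G.inv γ ∈ Q) ∧
  (∀ x, G.unit x ∉ Q) ∧
  (∀ γ : G.E, ∃ n, γ ∈ G.Qpow Q n) ∧
  (∀ (a : G.E) (l : List G.E), G.IsReducedChain Q (a :: l) →
      List.foldl G.mul a l ≠ G.unit (G.r a))

/-- The length function `ψ(γ) = d_{r γ}(r γ, γ) = min {n | γ ∈ Q^n}`. -/
noncomputable def treeDist (Q : Set G.E) (γ : G.E) : ℝ :=
  ((sInf {n : ℕ | γ ∈ G.Qpow Q n} : ℕ) : ℝ)

/-- The `A = L^∞(X)`-valued inner product `⟨ξ,η⟩_A(x) = Σ_{s γ = x} conj (ξ γ) η γ`. -/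
noncomputable def innerA (ξ η : G.E → ℂ) (x : G.X) : ℂ :=
  ∑' γ : {γ : G.E // G.s γ = x}, (starRingEnd ℂ) (ξ γ.1) * η γ.1

/-- The Haagerup property for a countable measured groupoid. -/
def HaagerupProperty [MeasurableSpace G.X] (μ : Measure G.X) : Prop :=
  ∃ F : ℕ → G.E → ℂ,
    (∀ n, G.IsPosDef (F n)) ∧
    (∀ n, ∀ᵐ x ∂μ, F n (G.unit x) = 1) ∧
    (∀ n, ∀ ε : ℝ, 0 < ε → G.nuSet μ {γ : G.E | ε < ‖F n γ‖} < ⊤) ∧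
    G.nuSet μ {γ : G.E | ¬ Tendsto (fun n => F n γ) atTop (nhds (1 : ℂ))} = 0

end CountableGroupoid

/-! For a conditionally negative definite real kernel `K` and a base point `o`, the kernel
`B i j = K i o + K j o - K i j - K o o` is positive semidefinite. Entrywise exponentials of
positive semidefinite matrices are positive semidefinite (the Taylor series is a nonnegative
combination of Hadamard powers, positive semidefinite by the Schur product theorem), and
`exp (-t K i j) = e i * e j * exp (t B i j)` with `e i = exp (-t (K i o - K o o / 2))`, which is a
Schur product of positive semidefinite matrices again. On a groupoid this is applied fibrewise,
to the kernel `ψ (γᵢ⁻¹ γⱼ)` on the range fibre `G^x`. -/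

open Matrix Finset

namespace Matrix

variable {ι : Type*} [Fintype ι]

theorem dotProduct_mulVec_eq_sum_sum {R : Type*} [CommSemiring R] (M : Matrix ι ι R)
    (u v : ι → R) : u ⬝ᵥ (M *ᵥ v) = ∑ i, ∑ j, u i * v j * M i j := by
  simp only [dotProduct, mulVec, mul_sum]
  exact sum_congr rfl fun i _ => sum_congr rfl fun j _ => by ring

def IsCondNegDef (K : Matrix ι ι ℝ) : Prop :=
  K.IsSymm ∧ ∀ c : ι → ℝ, ∑ i, c i = 0 → c ⬝ᵥ (K *ᵥ c) ≤ 0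

/-- For `K i j = d(i, j)²`, this is twice the Gromov product `(i | j)_o`. -/
def gromovKernel (K : Matrix ι ι ℝ) (o : ι) : Matrix ι ι ℝ :=
  of fun i j => K i o + K j o - K i j - K o o

theorem IsCondNegDef.posSemidef_gromovKernel [DecidableEq ι] {K : Matrix ι ι ℝ}
    (hK : K.IsCondNegDef) (o : ι) : (K.gromovKernel o).PosSemidef := by
  refine .of_dotProduct_mulVec_nonneg ?_ fun c => ?_
  · ext i j
    simp only [conjTranspose_apply, star_trivial, gromovKernel, of_apply, hK.1.apply]
    ring
  set S := ∑ i, c i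
  set P := ∑ i, c i * K i o
  have hBc : K.gromovKernel o *ᵥ c = S • K.col o + (P - S * K o o) • 1 - K *ᵥ c := by
    ext i
    simp only [mulVec, dotProduct, gromovKernel, of_apply, sub_mul, add_mul, sum_sub_distrib,
      sum_add_distrib, ← sum_mul, Pi.add_apply, Pi.sub_apply, Pi.smul_apply, col_apply,
      Pi.one_apply, smul_eq_mul, mul_one, mul_comm (K _ o), S, P]
    ring
  have hB : c ⬝ᵥ (K.gromovKernel o *ᵥ c) = 2 * S * P - c ⬝ᵥ (K *ᵥ c) - S ^ 2 * K o o := by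
    rw [hBc, dotProduct_sub, dotProduct_add, dotProduct_smul, dotProduct_smul, dotProduct_one]
    simp only [smul_eq_mul]
    change S * P + (P - S * K o o) * S - _ = _
    ring
  have hKo : (K *ᵥ c) o = P := by
    simp only [mulVec, dotProduct, ← hK.1.apply o, mul_comm (K _ o), P]
  -- `c - S • δ_o` sums to zero, and its `K`-form is minus the `gromovKernel`-form of `c`
  have hc' := hK.2 (c - S • Pi.single o 1) (by simp [sum_sub_distrib, ← mul_sum, S])
  have hcol : c ⬝ᵥ K.col o = P := rfl
  simp only [mulVec_sub, mulVec_smul, sub_dotProduct, dotProduct_sub, smul_dotProduct,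
    dotProduct_smul, mulVec_single_one, single_one_dotProduct, hKo, hcol, col_apply,
    smul_eq_mul] at hc'
  rw [star_trivial, hB]
  linear_combination hc'

theorem PosSemidef.map_pow {A : Matrix ι ι ℝ} (hA : A.PosSemidef) :
    ∀ k : ℕ, (A.map (· ^ k)).PosSemidef
  | 0 => by simpa [vecMulVec, map] using posSemidef_vecMulVec_self_star (1 : ι → ℝ)
  | k + 1 => by
    have hsucc : A.map (· ^ (k + 1)) = A.map (· ^ k) ⊙ A := by ext; simp [pow_succ]
    exact hsucc ▸ (hA.map_pow k).hadamard hA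

theorem PosSemidef.map_exp {A : Matrix ι ι ℝ} (hA : A.PosSemidef) :
    (A.map Real.exp).PosSemidef := by
  refine .of_dotProduct_mulVec_nonneg (hA.isHermitian.map _ fun _ => rfl) fun c => ?_
  have hsum : HasSum (fun k : ℕ => ∑ i, ∑ j, star c i * c j * (A i j ^ k / k.factorial))
      (∑ i, ∑ j, star c i * c j * Real.exp (A i j)) :=
    hasSum_sum fun i _ => hasSum_sum fun j _ => Real.exp_eq_exp_ℝ ▸
      (NormedSpace.expSeries_div_hasSum_exp (A i j)).mul_left _
  rw [dotProduct_mulVec_eq_sum_sum]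
  refine hsum.nonneg fun k => ?_
  simp_rw [← mul_div_assoc, ← sum_div]
  have hk := (hA.map_pow k).dotProduct_mulVec_nonneg c
  rw [dotProduct_mulVec_eq_sum_sum] at hk
  exact div_nonneg hk (by positivity)

theorem PosSemidef.map_algebraMap {𝕜 : Type*} [RCLike 𝕜] {A : Matrix ι ι ℝ}
    (hA : A.PosSemidef) : (A.map (algebraMap ℝ 𝕜)).PosSemidef := by
  classical
  open scoped MatrixOrder in
  obtain ⟨B, rfl⟩ := CStarAlgebra.nonneg_iff_eq_star_mul_self.mp hA.nonneg
  rw [star_eq_conjTranspose, Matrix.map_mul, conjTranspose_map _ (fun _ => by simp)]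
  exact posSemidef_conjTranspose_mul_self _

/-- Schoenberg's theorem. -/
theorem IsCondNegDef.posSemidef_map_exp_neg_mul {K : Matrix ι ι ℝ} (hK : K.IsCondNegDef)
    {t : ℝ} (ht : 0 ≤ t) : (K.map fun a => Real.exp (-(t * a))).PosSemidef := by
  classical
  rcases isEmpty_or_nonempty ι with _ | ⟨⟨o⟩⟩
  · exact .of_dotProduct_mulVec_nonneg (by ext i; exact isEmptyElim i) fun c => by simp
  set e : ι → ℝ := fun i => Real.exp (-(t * (K i o - K o o / 2)))
  have hfactor : K.map (fun a => Real.exp (-(t * a)))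
      = vecMulVec e (star e) ⊙ (t • K.gromovKernel o).map Real.exp := by
    ext i j
    simp only [map_apply, hadamard_apply, vecMulVec_apply, star_trivial, smul_apply,
      smul_eq_mul, gromovKernel, of_apply, e, ← Real.exp_add]
    congr 1
    ring
  rw [hfactor]
  exact (posSemidef_vecMulVec_self_star e).hadamard
    ((hK.posSemidef_gromovKernel o).smul ht).map_exp

end Matrix

namespace CountableGroupoid

variable (G : CountableGroupoid)

theorem eq_inv_of_mul_eq_unit {a b : G.E} (hab : G.s a = G.r b)
    (h : G.mul a b = G.unit (G.r a)) : b = G.inv a := by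
  have hassoc := G.mul_assoc' (G.inv a) a b (G.s_inv a) hab
  rwa [G.inv_mul, h, hab, G.unit_mul, ← G.s_inv a, G.mul_unit] at hassoc

theorem inv_inv (a : G.E) : G.inv (G.inv a) = a :=
  (G.eq_inv_of_mul_eq_unit (G.s_inv a) (by rw [G.r_inv, G.inv_mul])).symm

theorem inv_mul_rev {a b : G.E} (hab : G.s a = G.r b) :
    G.inv (G.mul a b) = G.mul (G.inv b) (G.inv a) := by
  have hba : G.s (G.inv b) = G.r (G.inv a) := by rw [G.s_inv, G.r_inv, hab]
  refine (G.eq_inv_of_mul_eq_unit ?_ ?_).symm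
  · rw [G.s_mul _ _ hab, G.r_mul _ _ hba, G.r_inv]
  · have hb : G.mul b (G.mul (G.inv b) (G.inv a)) = G.inv a := by
      rw [← G.mul_assoc' b (G.inv b) (G.inv a) (G.r_inv b).symm hba, G.mul_inv,
        ← hab, ← G.r_inv a, G.unit_mul]
    rw [G.mul_assoc' a b _ hab (by rw [G.r_mul _ _ hba, G.r_inv]), hb, G.mul_inv,
      G.r_mul _ _ hab]

variable {G}

theorem IsCondNegDef.isCondNegDef_fibre {ψ : G.E → ℝ} (hψ : G.IsCondNegDef ψ) {x : G.X}
    {n : ℕ} {γ : Fin n → G.E} (hγ : ∀ i, G.r (γ i) = x) :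
    (Matrix.of fun i j => ψ (G.mul (G.inv (γ i)) (γ j))).IsCondNegDef := by
  refine ⟨?_, fun c hc => ?_⟩
  · ext i j
    have hcomp : G.s (G.inv (γ j)) = G.r (γ i) := by rw [G.s_inv, hγ i, hγ j]
    simp only [transpose_apply, of_apply]
    rw [← hψ.2.1, G.inv_mul_rev hcomp, G.inv_inv]
  · rw [dotProduct_mulVec_eq_sum_sum]
    exact hψ.2.2 x n γ hγ c hc

end CountableGroupoid

/-- Schoenberg, fibrewise: if `ψ` is real conditionally negative definite
on the groupoid `G`, then `γ ↦ exp (−t ψ γ)` is positive definite for every `t > 0`. -/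
theorem schoenberg_groupoid (G : CountableGroupoid) (ψ : G.E → ℝ)
    (hψ : G.IsCondNegDef ψ) (t : ℝ) (ht : 0 < t) :
    G.IsPosDef fun γ => ((Real.exp (-(t * ψ γ)) : ℝ) : ℂ) := by
  intro x n γ hγ lam
  have hpsd := ((hψ.isCondNegDef_fibre hγ).posSemidef_map_exp_neg_mul ht.le).map_algebraMap
    (𝕜 := ℂ)
  have hform := hpsd.dotProduct_mulVec_nonneg (star lam)
  rw [dotProduct_mulVec_eq_sum_sum] at hform
  simpa using hform
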